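/- arXiv:1802.05782 — 2 statements merged into one kernel-verified Lean document; each statement's English description precedes it below -/
import Mathlib

section
/- Let K ≥ 2, let x_1 < x_2 < … < x_K be real numbers, let μ_1, …, μ_K > 0 satisfy μ_1 + … + μ_K = 1, and let β > 0. Then there is a unique λ* > x_K with Σ_{k=1}^K μ_k/(λ* − x_k) = 2β, and sup{ β Σ_{k=1}^K x_k f_k + (1/2) Σ_{k=1}^K μ_k log(f_k/μ_k) : f_1,…,f_K > 0, f_1 + … + f_K = 1 } = β λ* − 1/2 − (1/2) log(2β) − (1/2) Σ_{k=1}^K μ_k log(λ* − x_k), and the supremum is attained at the unique maximizer f_k = (1/(2β)) · μ_k/(λ* − x_k). -/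
open Finset

theorem constrained_entropy_optimization
    (K : ℕ) (hK : 2 ≤ K) (x w : Fin K → ℝ) (hx : StrictMono x)
    (hw : ∀ k, 0 < w k) (hsum : ∑ k, w k = 1) (β : ℝ) (hβ : 0 < β) :
    ∃ l : ℝ, x ⟨K - 1, by omega⟩ < l ∧ (∑ k, w k / (l - x k)) = 2 * β ∧
      (∀ l' : ℝ, x ⟨K - 1, by omega⟩ < l' → (∑ k, w k / (l' - x k)) = 2 * β → l' = l) ∧
      IsGreatest
        { v : ℝ | ∃ f : Fin K → ℝ, (∀ k, 0 < f k) ∧ (∑ k, f k) = 1 ∧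
            v = β * ∑ k, x k * f k + (1 / 2) * ∑ k, w k * Real.log (f k / w k) }
        (β * l - 1 / 2 - (1 / 2) * Real.log (2 * β)
          - (1 / 2) * ∑ k, w k * Real.log (l - x k)) ∧
      (β * ∑ k, x k * (1 / (2 * β) * (w k / (l - x k)))
          + (1 / 2) * ∑ k, w k * Real.log ((1 / (2 * β) * (w k / (l - x k))) / w k)
        = β * l - 1 / 2 - (1 / 2) * Real.log (2 * β)
          - (1 / 2) * ∑ k, w k * Real.log (l - x k)) ∧
      ∀ f : Fin K → ℝ, (∀ k, 0 < f k) → (∑ k, f k) = 1 →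
        β * ∑ k, x k * f k + (1 / 2) * ∑ k, w k * Real.log (f k / w k)
          = β * l - 1 / 2 - (1 / 2) * Real.log (2 * β)
            - (1 / 2) * ∑ k, w k * Real.log (l - x k) →
        f = fun k => 1 / (2 * β) * (w k / (l - x k)) := by
  obtain ⟨m, hm⟩ : ∃ m, m = x ⟨K - 1, by omega⟩ := ⟨_, rfl⟩
  rw [← hm]
  have hxm : ∀ k, x k ≤ m := fun k => hm ▸
    hx.monotone (Fin.le_def.mpr (by have := k.isLt; simp; omega))
  have hwlast := hw ⟨K - 1, by omega⟩
  have hwle1 : w ⟨K - 1, by omega⟩ ≤ 1 := by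
    rw [← hsum]
    exact Finset.single_le_sum (fun k _ => (hw k).le) (mem_univ _)
  obtain ⟨a, ha⟩ : ∃ a : ℝ, a = m + w ⟨K - 1, by omega⟩ / (4 * β) := ⟨_, rfl⟩
  obtain ⟨b, hb⟩ : ∃ b : ℝ, b = m + 1 / β := ⟨_, rfl⟩
  have hma : m < a := by
    have : 0 < w ⟨K - 1, by omega⟩ / (4 * β) := by positivity
    linarith
  have hab : a ≤ b := by
    have h1 : w ⟨K - 1, by omega⟩ / (4 * β) ≤ 1 / (4 * β) :=
      div_le_div_of_nonneg_right hwle1 (by positivity)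
    have : 1 / (4 * β) ≤ 1 / β := by
      rw [div_le_div_iff₀ (by positivity) hβ]; linarith
    linarith
  -- strict antitonicity
  have hanti : ∀ a' ∈ Set.Ioi m, ∀ b' ∈ Set.Ioi m, a' < b' →
      (∑ k, w k / (b' - x k)) < ∑ k, w k / (a' - x k) := by
    intro a' ha' b' hb' hlt
    apply Finset.sum_lt_sum_of_nonempty ⟨⟨0, by omega⟩, mem_univ _⟩
    intro k _
    apply div_lt_div_of_pos_left (hw k) (by have := hxm k; simp at ha'; linarith)
    have := hxm k; linarith
  have hga : 4 * β ≤ ∑ k, w k / (a - x k) := by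
    have h1 : w ⟨K - 1, by omega⟩ / (a - m) = 4 * β := by
      rw [ha, add_sub_cancel_left, div_div_eq_mul_div, mul_comm,
        mul_div_assoc, div_self (ne_of_gt hwlast), mul_one]
    have h2 : w ⟨K - 1, by omega⟩ / (a - x ⟨K - 1, by omega⟩) ≤ ∑ k, w k / (a - x k) :=
      Finset.single_le_sum (f := fun k => w k / (a - x k))
        (fun k _ => (div_pos (hw k) (by have := hxm k; linarith)).le) (mem_univ _)
    rw [← hm] at h2; linarith
  have hgb : (∑ k, w k / (b - x k)) ≤ β := by
    have h1 : ∀ k, w k / (b - x k) ≤ w k * β := by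
      intro k
      have hbx : 1 / β ≤ b - x k := by have := hxm k; linarith [hb]
      have : w k / (b - x k) ≤ w k / (1 / β) :=
        div_le_div_of_nonneg_left (hw k).le (by positivity) hbx
      rw [div_div_eq_mul_div, div_one] at this
      linarith
    calc (∑ k, w k / (b - x k)) ≤ ∑ k, w k * β := Finset.sum_le_sum fun k _ => h1 k
      _ = β := by rw [← Finset.sum_mul, hsum, one_mul]
  have hcont : ContinuousOn (fun l => ∑ k, w k / (l - x k)) (Set.Icc a b) := by
    apply continuousOn_finset_sum
    intro k _
    apply ContinuousOn.div continuousOn_const (by fun_prop)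
    intro l hl
    have := hxm k
    have : x k < l := lt_of_le_of_lt (hxm k) (lt_of_lt_of_le hma hl.1)
    intro h; linarith [sub_eq_zero.mp h]
  have hmem : (2 : ℝ) * β ∈ Set.Icc ((fun l => ∑ k, w k / (l - x k)) b)
      ((fun l => ∑ k, w k / (l - x k)) a) := by
    constructor
    · show (∑ k, w k / (b - x k)) ≤ 2 * β; linarith
    · show 2 * β ≤ ∑ k, w k / (a - x k); linarith
  obtain ⟨l, hl_mem, hl_eq0⟩ := intermediate_value_Icc' hab hcont hmem
  have hl_eq : (∑ k, w k / (l - x k)) = 2 * β := hl_eq0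
  have hml : m < l := lt_of_lt_of_le hma hl_mem.1
  have huniq : ∀ l' : ℝ, m < l' → (∑ k, w k / (l' - x k)) = 2 * β → l' = l := by
    intro l' hml' hl'_eq
    by_contra hne
    rcases lt_or_gt_of_ne hne with h | h
    · have := hanti l' hml' l hml h; rw [hl_eq, hl'_eq] at this; linarith
    · have := hanti l hml l' hml' h; rw [hl_eq, hl'_eq] at this; linarith
  have hlx : ∀ k, 0 < l - x k := fun k => by have := hxm k; linarith
  clear hcont hmem hanti hl_eq0 hga hgb hma hab ha hb
  refine ⟨l, hml, hl_eq, huniq, ?_⟩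
  set fs : Fin K → ℝ := fun k => 1 / (2 * β) * (w k / (l - x k)) with hfs_def
  have hfs : ∀ k, 0 < fs k := fun k => by
    have := hlx k; have := hw k
    simp only [hfs_def]; positivity
  have hfs_sum : ∑ k, fs k = 1 := by
    simp only [hfs_def]
    rw [← Finset.mul_sum, hl_eq]
    field_simp
  have hwfs : ∀ k, w k / fs k = 2 * β * (l - x k) := by
    intro k
    have h1 := hlx k; have h2 := hw k
    simp only [hfs_def]
    field_simp
  -- value identity: F(fs) = V
  have hxid : ∑ k, x k * (w k / (l - x k)) = 2 * β * l - 1 := by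
    have h : ∀ k : Fin K, x k * (w k / (l - x k)) = l * (w k / (l - x k)) - w k := by
      intro k; have := hlx k; field_simp; ring
    calc ∑ k, x k * (w k / (l - x k)) = ∑ k, (l * (w k / (l - x k)) - w k) :=
          Finset.sum_congr rfl fun k _ => h k
      _ = l * (∑ k, w k / (l - x k)) - ∑ k, w k := by
          rw [Finset.sum_sub_distrib, Finset.mul_sum]
      _ = 2 * β * l - 1 := by rw [hl_eq, hsum]; ring
  have hlogfs : ∀ k, Real.log (fs k / w k) = -Real.log (2 * β) - Real.log (l - x k) := by
    intro k
    have h1 := hlx k; have h2 := hw k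
    have h0 : fs k / w k = (2 * β * (l - x k))⁻¹ := by
      simp only [hfs_def]; field_simp
    rw [h0, Real.log_inv, Real.log_mul (by positivity) (ne_of_gt h1)]
    ring
  have hlogsum : ∑ k, w k * Real.log (fs k / w k)
      = -Real.log (2 * β) - ∑ k, w k * Real.log (l - x k) := by
    calc ∑ k, w k * Real.log (fs k / w k)
        = ∑ k, (-(w k * Real.log (2 * β)) - w k * Real.log (l - x k)) := by
          refine Finset.sum_congr rfl fun k _ => ?_
          rw [hlogfs k]; ring
      _ = -((∑ k, w k) * Real.log (2 * β)) - ∑ k, w k * Real.log (l - x k) := by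
          rw [Finset.sum_sub_distrib, Finset.sum_neg_distrib, Finset.sum_mul]
      _ = _ := by rw [hsum]; ring
  have hxfs : ∑ k, x k * fs k = 1 / (2 * β) * (2 * β * l - 1) := by
    calc ∑ k, x k * fs k = ∑ k, 1 / (2 * β) * (x k * (w k / (l - x k))) := by
          refine Finset.sum_congr rfl fun k _ => ?_
          simp only [hfs_def]; ring
      _ = 1 / (2 * β) * ∑ k, x k * (w k / (l - x k)) := by rw [Finset.mul_sum]
      _ = _ := by rw [hxid]
  have hval : β * ∑ k, x k * fs k + (1 / 2) * ∑ k, w k * Real.log (fs k / w k)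
      = β * l - 1 / 2 - (1 / 2) * Real.log (2 * β)
        - (1 / 2) * ∑ k, w k * Real.log (l - x k) := by
    rw [hxfs, hlogsum]
    field_simp
    ring
  have hval' : β * ∑ k, x k * (1 / (2 * β) * (w k / (l - x k)))
      + (1 / 2) * ∑ k, w k * Real.log ((1 / (2 * β) * (w k / (l - x k))) / w k)
      = β * l - 1 / 2 - (1 / 2) * Real.log (2 * β)
        - (1 / 2) * ∑ k, w k * Real.log (l - x k) := by
    have h := hval
    simp only [hfs_def] at h
    exact h
  clear_value fs
  -- per-term tangent inequality
  have hterm : ∀ (k : Fin K) (y : ℝ), 0 < y →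
      β * (x k * y) + 1 / 2 * (w k * Real.log (y / w k))
        ≤ β * (x k * fs k) + 1 / 2 * (w k * Real.log (fs k / w k))
          + β * l * (y - fs k) := by
    intro k y hy
    have hwk := hw k; have hlk := hlx k; have hfk := hfs k
    have h1 : Real.log (y / w k) = Real.log (fs k / w k) + Real.log (y / fs k) := by
      rw [Real.log_div (ne_of_gt hy) (ne_of_gt hwk),
        Real.log_div (ne_of_gt hfk) (ne_of_gt hwk),
        Real.log_div (ne_of_gt hy) (ne_of_gt hfk)]
      ring
    have hle : Real.log (y / fs k) ≤ y / fs k - 1 :=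
      Real.log_le_sub_one_of_pos (by positivity)
    have h3 : w k * Real.log (y / fs k) ≤ w k * (y / fs k - 1) :=
      mul_le_mul_of_nonneg_left hle hwk.le
    have hw2 : w k = 2 * β * (l - x k) * fs k := (div_eq_iff (ne_of_gt hfk)).mp (hwfs k)
    have h4 : w k * (y / fs k - 1) = 2 * β * (l - x k) * (y - fs k) := by
      rw [hw2]; field_simp
    rw [h4] at h3
    rw [h1]
    nlinarith [h3]
  have hterm_strict : ∀ (k : Fin K) (y : ℝ), 0 < y → y ≠ fs k →
      β * (x k * y) + 1 / 2 * (w k * Real.log (y / w k))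
        < β * (x k * fs k) + 1 / 2 * (w k * Real.log (fs k / w k))
          + β * l * (y - fs k) := by
    intro k y hy hne
    have hwk := hw k; have hlk := hlx k; have hfk := hfs k
    have h1 : Real.log (y / w k) = Real.log (fs k / w k) + Real.log (y / fs k) := by
      rw [Real.log_div (ne_of_gt hy) (ne_of_gt hwk),
        Real.log_div (ne_of_gt hfk) (ne_of_gt hwk),
        Real.log_div (ne_of_gt hy) (ne_of_gt hfk)]
      ring
    have hle : Real.log (y / fs k) < y / fs k - 1 := by
      apply Real.log_lt_sub_one_of_pos (by positivity)
      intro h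
      apply hne
      field_simp at h
      exact h
    have h3 : w k * Real.log (y / fs k) < w k * (y / fs k - 1) :=
      mul_lt_mul_of_pos_left hle hwk
    have hw2 : w k = 2 * β * (l - x k) * fs k := (div_eq_iff (ne_of_gt hfk)).mp (hwfs k)
    have h4 : w k * (y / fs k - 1) = 2 * β * (l - x k) * (y - fs k) := by
      rw [hw2]; field_simp
    rw [h4] at h3
    rw [h1]
    nlinarith [h3]
  -- sum form
  have hF : ∀ f : Fin K → ℝ,
      β * ∑ k, x k * f k + (1 / 2) * ∑ k, w k * Real.log (f k / w k)
        = ∑ k, (β * (x k * f k) + 1 / 2 * (w k * Real.log (f k / w k))) := by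
    intro f
    rw [Finset.mul_sum, Finset.mul_sum, ← Finset.sum_add_distrib]
  have hkey : ∀ f : Fin K → ℝ, (∀ k, 0 < f k) → (∑ k, f k) = 1 →
      β * ∑ k, x k * f k + (1 / 2) * ∑ k, w k * Real.log (f k / w k)
        ≤ β * ∑ k, x k * fs k + (1 / 2) * ∑ k, w k * Real.log (fs k / w k) := by
    intro f hf hf1
    rw [hF f, hF fs]
    calc ∑ k, (β * (x k * f k) + 1 / 2 * (w k * Real.log (f k / w k)))
        ≤ ∑ k, (β * (x k * fs k) + 1 / 2 * (w k * Real.log (fs k / w k))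
            + β * l * (f k - fs k)) :=
          Finset.sum_le_sum fun k _ => hterm k (f k) (hf k)
      _ = ∑ k, (β * (x k * fs k) + 1 / 2 * (w k * Real.log (fs k / w k)))
            + β * l * ((∑ k, f k) - ∑ k, fs k) := by
          rw [Finset.sum_add_distrib, ← Finset.mul_sum, Finset.sum_sub_distrib]
      _ = _ := by rw [hf1, hfs_sum]; ring
  refine ⟨⟨⟨fs, hfs, hfs_sum, hval.symm⟩, ?_⟩, hval', ?_⟩
  · rintro v ⟨f, hf, hf1, rfl⟩
    calc _ ≤ _ := hkey f hf hf1
      _ = _ := hval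
  · intro f hf hf1 hfeq
    funext k0
    by_contra hne
    have hstrict : β * ∑ k, x k * f k + (1 / 2) * ∑ k, w k * Real.log (f k / w k)
        < β * ∑ k, x k * fs k + (1 / 2) * ∑ k, w k * Real.log (fs k / w k) := by
      rw [hF f, hF fs]
      calc ∑ k, (β * (x k * f k) + 1 / 2 * (w k * Real.log (f k / w k)))
          < ∑ k, (β * (x k * fs k) + 1 / 2 * (w k * Real.log (fs k / w k))
              + β * l * (f k - fs k)) := by
            apply Finset.sum_lt_sum (fun k _ => hterm k (f k) (hf k))
            exact ⟨k0, mem_univ _, hterm_strict k0 (f k0) (hf k0) hne⟩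
        _ = ∑ k, (β * (x k * fs k) + 1 / 2 * (w k * Real.log (fs k / w k)))
              + β * l * ((∑ k, f k) - ∑ k, fs k) := by
            rw [Finset.sum_add_distrib, ← Finset.mul_sum, Finset.sum_sub_distrib]
        _ = _ := by rw [hf1, hfs_sum]; ring
    rw [hfeq, ← hval] at hstrict
    exact lt_irrefl _ hstrict
end

section
/- For every integer K ≥ 2, the function β ↦ 𝓕_K(β) is differentiable on (0,∞) and for every β > 0 its derivative equals 𝓕_K′(β) = λ_K(β) − 1/(2β). -/
open MeasureTheory Filter Real

noncomputable section
/-- The semicircle density `μ(x) = (1/π)√(2-x²) 1_{[-√2,√2]}(x)`. -/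
def semicircle (x : ℝ) : ℝ :=
  if x ∈ Set.Icc (-Real.sqrt 2) (Real.sqrt 2) then (1 / Real.pi) * Real.sqrt (2 - x ^ 2) else 0


/-- The grid points `x_k = -√2 + 2√2(k-1)/K` (here `k = 0, …, K` zero-based, so that
`xval K 0 = x_1 = -√2` and `xval K K = x_{K+1} = √2`). -/
def xval (K k : ℕ) : ℝ := -Real.sqrt 2 + 2 * Real.sqrt 2 * k / K

/-- `μ_k = ∫_{x_k}^{x_{k+1}} μ(x) dx` for the semicircle density (zero-based `k`). -/
def muK (K k : ℕ) : ℝ := ∫ x in xval K k..xval K (k + 1), semicircle x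

/-- `g_K(λ) = ∑_{k=1}^K μ_k / (λ - x_k)`. -/
def gK (K : ℕ) (l : ℝ) : ℝ := ∑ k : Fin K, muK K k / (l - xval K k)

/-- `h_K(λ) = ∑_{k=1}^K μ_k log(λ - x_k)`. -/
def hKfun (K : ℕ) (l : ℝ) : ℝ := ∑ k : Fin K, muK K k * Real.log (l - xval K k)

/-- `λ_K(β)`, the unique `λ > x_K` with `g_K(λ) = 2β`.  Since `g_K` is strictly
decreasing from `+∞` to `0` on `(x_K, ∞)`, it is realized here as the infimum of the
set `{λ > x_K : g_K(λ) ≤ 2β}`. -/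
def lamK (K : ℕ) (β : ℝ) : ℝ := sInf { l : ℝ | xval K (K - 1) < l ∧ gK K l ≤ 2 * β }

/-- `𝓕_K(β) = β λ_K(β) - 1/2 - (1/2) log(2β) - (1/2) h_K(λ_K(β))`. -/
def FKfun (K : ℕ) (β : ℝ) : ℝ :=
  β * lamK K β - 1 / 2 - (1 / 2) * Real.log (2 * β) - (1 / 2) * hKfun K (lamK K β)

lemma sqrt2_pos : (0:ℝ) < Real.sqrt 2 := Real.sqrt_pos.mpr (by norm_num)

lemma xval_mono {K : ℕ} (hK : 0 < K) : Monotone (xval K) := by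
  intro j k hjk
  unfold xval
  have h2 : (0:ℝ) < Real.sqrt 2 := sqrt2_pos
  have hKr : (0:ℝ) < (K:ℝ) := by exact_mod_cast hK
  have : (j:ℝ) ≤ (k:ℝ) := by exact_mod_cast hjk
  gcongr

lemma xval_strictMono {K : ℕ} (hK : 0 < K) : StrictMono (xval K) := by
  intro j k hjk
  unfold xval
  have h2 : (0:ℝ) < Real.sqrt 2 := sqrt2_pos
  have hKr : (0:ℝ) < (K:ℝ) := by exact_mod_cast hK
  have : (j:ℝ) < (k:ℝ) := by exact_mod_cast hjk
  gcongr

lemma xval_zero {K : ℕ} : xval K 0 = -Real.sqrt 2 := by simp [xval]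

lemma xval_last {K : ℕ} (hK : 0 < K) : xval K K = Real.sqrt 2 := by
  have hKr : (K:ℝ) ≠ 0 := by exact_mod_cast hK.ne'
  unfold xval
  rw [mul_div_assoc, div_self hKr]
  ring

lemma semicircle_nonneg (x : ℝ) : 0 ≤ semicircle x := by
  unfold semicircle
  split
  · have := Real.pi_pos
    positivity
  · exact le_refl 0

lemma semicircle_pos {x : ℝ} (h : x ∈ Set.Ioo (-Real.sqrt 2) (Real.sqrt 2)) :
    0 < semicircle x := by
  have hx : x ∈ Set.Icc (-Real.sqrt 2) (Real.sqrt 2) := Set.Ioo_subset_Icc_self h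
  unfold semicircle
  rw [if_pos hx]
  have hπ := Real.pi_pos
  have hsq : x ^ 2 < 2 := by
    have h2 : Real.sqrt 2 ^ 2 = 2 := Real.sq_sqrt (by norm_num)
    calc x ^ 2 < Real.sqrt 2 ^ 2 := sq_lt_sq' h.1 h.2
    _ = 2 := h2
  have : 0 < Real.sqrt (2 - x ^ 2) := Real.sqrt_pos.mpr (by linarith)
  positivity

lemma integrable_semicircle : Integrable semicircle := by
  have h : semicircle = (Set.Icc (-Real.sqrt 2) (Real.sqrt 2)).indicator
      (fun x => (1 / Real.pi) * Real.sqrt (2 - x ^ 2)) := by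
    funext x; simp [semicircle, Set.indicator_apply]
  rw [h, integrable_indicator_iff measurableSet_Icc]
  apply ContinuousOn.integrableOn_Icc
  fun_prop

lemma muK_pos {K k : ℕ} (hK : 0 < K) (hk : k < K) : 0 < muK K k := by
  apply intervalIntegral.intervalIntegral_pos_of_pos_on
    integrable_semicircle.intervalIntegrable
  · intro x hx
    apply semicircle_pos
    constructor
    · calc -Real.sqrt 2 = xval K 0 := xval_zero.symm
      _ ≤ xval K k := xval_mono hK (Nat.zero_le _)
      _ < x := hx.1
    · calc x < xval K (k+1) := hx.2
      _ ≤ xval K K := xval_mono hK hk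
      _ = Real.sqrt 2 := xval_last hK
  · exact xval_strictMono hK (Nat.lt_succ_self k)

lemma xk_le {K : ℕ} (hK : 0 < K) (k : Fin K) : xval K ↑k ≤ xval K (K-1) :=
  xval_mono hK (Nat.le_pred_of_lt k.isLt)

lemma sub_pos' {K : ℕ} {l : ℝ} (hK : 0 < K) (hl : xval K (K-1) < l) (k : Fin K) :
    0 < l - xval K ↑k := by
  have := xk_le hK k; linarith

lemma gK_pos {K : ℕ} {l : ℝ} (hK : 0 < K) (hl : xval K (K-1) < l) : 0 < gK K l := by
  apply Finset.sum_pos'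
  · intro k _
    exact div_nonneg (muK_pos hK k.isLt).le (sub_pos' hK hl k).le
  · refine ⟨⟨K-1, by omega⟩, Finset.mem_univ _, ?_⟩
    exact div_pos (muK_pos hK (by omega)) (sub_pos' hK hl _)

lemma gK_hasStrictDerivAt {K : ℕ} {l : ℝ} (hK : 0 < K) (hl : xval K (K-1) < l) :
    HasStrictDerivAt (gK K) (∑ k : Fin K, -(muK K ↑k / (l - xval K ↑k)^2)) l := by
  have h : ∀ k : Fin K, HasStrictDerivAt (fun l : ℝ => muK K ↑k / (l - xval K ↑k))
      (-(muK K ↑k / (l - xval K ↑k)^2)) l := by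
    intro k
    have h1 : HasStrictDerivAt (fun l : ℝ => l - xval K ↑k) 1 l :=
      (hasStrictDerivAt_id l).sub_const _
    have h2 := (hasStrictDerivAt_const l (muK K ↑k)).fun_div h1 (ne_of_gt (sub_pos' hK hl k))
    convert h2 using 1
    · rfl
    · rfl
    · ring
  exact HasStrictDerivAt.fun_sum fun k _ => h k

lemma gK_deriv_neg {K : ℕ} {l : ℝ} (hK : 0 < K) (hl : xval K (K-1) < l) :
    (∑ k : Fin K, -(muK K ↑k / (l - xval K ↑k)^2)) < 0 := by
  rw [Finset.sum_neg_distrib, neg_lt_zero]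
  apply Finset.sum_pos'
  · intro k _
    exact div_nonneg (muK_pos hK k.isLt).le (by positivity)
  · refine ⟨⟨K-1, by omega⟩, Finset.mem_univ _, ?_⟩
    have := sub_pos' hK hl ⟨K-1, by omega⟩
    exact div_pos (muK_pos hK (by omega)) (by positivity)

lemma gK_strictAntiOn {K : ℕ} (hK : 0 < K) :
    StrictAntiOn (gK K) (Set.Ioi (xval K (K-1))) := by
  apply strictAntiOn_of_deriv_neg (convex_Ioi _)
  · intro x hx
    exact ((gK_hasStrictDerivAt hK hx).hasDerivAt.continuousAt).continuousWithinAt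
  · intro x hx
    rw [interior_Ioi] at hx
    rw [(gK_hasStrictDerivAt hK hx).hasDerivAt.deriv]
    exact gK_deriv_neg hK hx

lemma lamK_eq {K : ℕ} (hK : 0 < K) {x β' : ℝ} (hax : xval K (K-1) < x)
    (hgx : gK K x = 2 * β') : lamK K β' = x := by
  have hset : { l : ℝ | xval K (K - 1) < l ∧ gK K l ≤ 2 * β' } = Set.Ici x := by
    ext l
    simp only [Set.mem_setOf_eq, Set.mem_Ici]
    constructor
    · rintro ⟨hal, hgl⟩
      by_contra h
      push_neg at h
      have := gK_strictAntiOn hK (Set.mem_Ioi.mpr hal) (Set.mem_Ioi.mpr hax) h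
      rw [hgx] at this
      linarith
    · intro hxl
      refine ⟨lt_of_lt_of_le hax hxl, ?_⟩
      rw [← hgx]
      exact (gK_strictAntiOn hK).antitoneOn (Set.mem_Ioi.mpr hax)
        (Set.mem_Ioi.mpr (lt_of_lt_of_le hax hxl)) hxl
  rw [lamK, hset, csInf_Ici]

lemma lamK_spec {K : ℕ} (hK : 0 < K) {β : ℝ} (hβ : 0 < β) :
    xval K (K-1) < lamK K β ∧ gK K (lamK K β) = 2 * β := by
  set a := xval K (K-1) with ha
  set μ := muK K (K-1) with hμdef
  have hμ : 0 < μ := muK_pos hK (by omega)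
  set M := ∑ k : Fin K, muK K ↑k with hM
  have hMpos : 0 < M := by
    apply Finset.sum_pos'
    · exact fun k _ => (muK_pos hK k.isLt).le
    · exact ⟨⟨K-1, by omega⟩, Finset.mem_univ _, muK_pos hK (by omega)⟩
  clear_value a μ M
  set l₁ := a + μ / (4*β) with hl₁def
  clear_value l₁
  have hal₁ : a < l₁ := by
    have : 0 < μ / (4*β) := by positivity
    linarith
  have hal₁' : xval K (K-1) < l₁ := by rw [← ha]; exact hal₁
  have hgl₁ : 2*β < gK K l₁ := by
    have hterm : μ / (l₁ - a) ≤ gK K l₁ := by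
      have heq2 : μ / (l₁ - a) =
          muK K ↑(⟨K-1, by omega⟩ : Fin K) / (l₁ - xval K ↑(⟨K-1, by omega⟩ : Fin K)) := by
        rw [hμdef, ha]
      rw [heq2]
      apply Finset.single_le_sum (f := fun k : Fin K => muK K ↑k / (l₁ - xval K ↑k))
      · intro k _
        exact div_nonneg (muK_pos hK k.isLt).le (sub_pos' hK hal₁' k).le
      · exact Finset.mem_univ _
    have heq : μ / (l₁ - a) = 4*β := by
      have h3 : l₁ - a = μ / (4*β) := by rw [hl₁def]; ring
      rw [h3]
      field_simp
    rw [heq] at hterm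
    linarith
  set l₂ := max (a + (M+1)/(2*β)) (l₁+1) with hl₂def
  clear_value l₂
  have hl₁l₂ : l₁ ≤ l₂ := by
    rw [hl₂def]; exact le_trans (by linarith : l₁ ≤ l₁ + 1) (le_max_right _ _)
  have hal₂ : a < l₂ := lt_of_lt_of_le hal₁ hl₁l₂
  have hal₂' : xval K (K-1) < l₂ := by rw [← ha]; exact hal₂
  have hgl₂ : gK K l₂ < 2*β := by
    have hsub : (M+1)/(2*β) ≤ l₂ - a := by
      have h2 : a + (M+1)/(2*β) ≤ l₂ := by rw [hl₂def]; exact le_max_left _ _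
      linarith
    have hsubpos : 0 < l₂ - a := by linarith
    have hstep : gK K l₂ ≤ M / (l₂ - a) := by
      rw [hM, Finset.sum_div]
      apply Finset.sum_le_sum
      intro k _
      have h1 : l₂ - a ≤ l₂ - xval K ↑k := by
        have := xk_le hK k; rw [← ha] at this; linarith
      gcongr
      exact (muK_pos hK k.isLt).le
    have hstep2 : M / (l₂ - a) ≤ M / ((M+1)/(2*β)) := by
      gcongr
    have hstep3 : M / ((M+1)/(2*β)) < 2*β := by
      rw [div_div_eq_mul_div]
      rw [div_lt_iff₀ (by positivity)]
      nlinarith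
    linarith
  have hcont : ContinuousOn (gK K) (Set.Icc l₁ l₂) := by
    intro x hx
    have hax : xval K (K-1) < x := by
      rw [← ha]; exact lt_of_lt_of_le hal₁ hx.1
    exact ((gK_hasStrictDerivAt hK hax).hasDerivAt.continuousAt).continuousWithinAt
  have hmem : 2*β ∈ Set.Icc (gK K l₂) (gK K l₁) := ⟨hgl₂.le, hgl₁.le⟩
  obtain ⟨x, hx, hgx⟩ := intermediate_value_Icc' hl₁l₂ hcont hmem
  have hax : xval K (K-1) < x := by
    rw [← ha]; exact lt_of_lt_of_le hal₁ hx.1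
  have heq := lamK_eq hK hax hgx
  rw [heq, ha]
  exact ⟨hax, hgx⟩

lemma hKfun_hasDerivAt {K : ℕ} {l : ℝ} (hK : 0 < K) (hl : xval K (K-1) < l) :
    HasDerivAt (hKfun K) (gK K l) l := by
  have h : ∀ k : Fin K, HasDerivAt (fun l : ℝ => muK K ↑k * Real.log (l - xval K ↑k))
      (muK K ↑k / (l - xval K ↑k)) l := by
    intro k
    have h1 : HasDerivAt (fun l : ℝ => l - xval K ↑k) 1 l := (hasDerivAt_id l).sub_const _
    have h2 := (h1.log (ne_of_gt (sub_pos' hK hl k))).const_mul (muK K ↑k)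
    convert h2 using 1
    · rfl
    · rfl
    · field_simp
  exact HasDerivAt.fun_sum fun k _ => h k

theorem FK_hasDerivAt (K : ℕ) (hK : 2 ≤ K) (β : ℝ) (hβ : 0 < β) :
    HasDerivAt (FKfun K) (lamK K β - 1 / (2 * β)) β := by
  have hK0 : 0 < K := by omega
  obtain ⟨hla, hgl⟩ := lamK_spec hK0 hβ
  set lam := lamK K β with hlamdef
  have hg' := gK_hasStrictDerivAt hK0 hla
  set D := ∑ k : Fin K, -(muK K ↑k / (lam - xval K ↑k)^2) with hD
  have hDne : D ≠ 0 := ne_of_lt (gK_deriv_neg hK0 hla)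
  -- local left inverse
  have hinv : ∀ᶠ x in nhds lam, lamK K (gK K x / 2) = x := by
    have hopen : ∀ᶠ x in nhds lam, xval K (K-1) < x :=
      eventually_gt_nhds hla
    filter_upwards [hopen] with x hx
    exact lamK_eq hK0 hx (by ring)
  have hG : HasStrictDerivAt (fun y => lamK K (y / 2)) D⁻¹ (gK K lam) :=
    hg'.to_local_left_inverse hDne hinv
  rw [hgl] at hG
  have h2 : HasStrictDerivAt (fun b : ℝ => 2 * b) 2 β := by
    simpa using (hasStrictDerivAt_id β).const_mul (2:ℝ)
  have hlam : HasStrictDerivAt (lamK K) (D⁻¹ * 2) β := by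
    have hcomp := hG.comp β h2
    have hfun : ((fun y => lamK K (y / 2)) ∘ fun b : ℝ => 2 * b) = lamK K := by
      funext b
      simp [Function.comp]
    rwa [hfun] at hcomp
  have hlam' : HasDerivAt (lamK K) (D⁻¹ * 2) β := hlam.hasDerivAt
  have h1 : HasDerivAt (fun b => b * lamK K b) (1 * lam + β * (D⁻¹ * 2)) β :=
    (hasDerivAt_id β).mul hlam'
  have hlog : HasDerivAt (fun b : ℝ => Real.log (2 * b)) (2 / (2 * β)) β := by
    have hin : HasDerivAt (fun b : ℝ => 2 * b) 2 β := by
      simpa using (hasDerivAt_id β).const_mul (2:ℝ)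
    exact hin.log (by positivity)
  have h3 : HasDerivAt (fun b => hKfun K (lamK K b)) (gK K lam * (D⁻¹ * 2)) β :=
    by have := (hKfun_hasDerivAt hK0 hla).comp β hlam'; exact this
  have hsum := ((h1.sub_const (1/2)).sub (hlog.const_mul (1/2))).sub (h3.const_mul (1/2))
  have hfun2 : (fun b => b * lamK K b - 1/2 - 1/2 * Real.log (2*b) - 1/2 * hKfun K (lamK K b))
      = FKfun K := by
    funext b
    simp [FKfun]
  replace hsum : HasDerivAt (fun b => b * lamK K b - 1/2 - 1/2 * Real.log (2*b) - 1/2 * hKfun K (lamK K b)) _ β := hsum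
  rw [hfun2] at hsum
  convert hsum using 1
  rw [hgl]
  field_simp
  ring

end
end
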